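/- A uniform random chord diagram is asymptotically almost surely indecomposable: if I(n) denotes the number of indecomposable perfect matchings of {1, …, 2n}, then lim_{n→∞} I(n)/(2n−1)!! = 1. -/

import Mathlib

/-!
A perfect matching of a `2n`-set is determined by the partner `b` of a fixed point `a` and a
matching of the remaining `2n - 2` points, so there are `φ(n) = (2n-1)‼` of them. A cut point
`j` of a matching of `Fin (2n)` is even, because the blocks left of it match up the first `j`
points; writing `j = 2t`, the blocks on either side form matchings of `2t` and `2n - 2t` points,
so at most `∑_{0<t<n} φ(t) φ(n-t)` matchings are decomposable.
Since `φ(j+k) φ(j+m) ≤ φ(j) φ(j+k+m)`, the two extreme terms of this sum are `φ(n-1)` and all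
others are at most `3 φ(n-2)`; as `φ(n) = (2n-1)(2n-3) φ(n-2)`, the sum is at most `2 φ(n) / n`.
-/

open Filter

/-- `φ(n) = (2n−1)!! = (2n)!/(2^n·n!)`, the number of perfect matchings (chord
diagrams) of `{1, …, 2n}` (the division is exact). -/
def phi (n : ℕ) : ℕ := (2 * n).factorial / (2 ^ n * n.factorial)

/-- The number of indecomposable chord diagrams with `n` chords: perfect matchings of
the linearly ordered set `Fin (2n)` (partitions into two-element blocks) such that for
no cut point `j` with `1 ≤ j < 2n` every block lies entirely within the first `j`
elements or entirely within the last `2n − j` elements. -/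
noncomputable def numIndecomposable (n : ℕ) : ℕ :=
  Nat.card {P : Finset (Finset (Fin (2 * n))) //
    (∀ b ∈ P, b.card = 2) ∧
    (∀ x : Fin (2 * n), ∃! b : Finset (Fin (2 * n)), b ∈ P ∧ x ∈ b) ∧
    ¬ ∃ j : ℕ, 0 < j ∧ j < 2 * n ∧
        ∀ b ∈ P, (∀ x ∈ b, (x : ℕ) < j) ∨ (∀ x ∈ b, j ≤ (x : ℕ))}

open Finset
open scoped Nat

theorem phi_add_one_eq_doubleFactorial (n : ℕ) : phi (n + 1) = (2 * n + 1)‼ := by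
  rw [phi, show 2 * (n + 1) = 2 * n + 1 + 1 by ring, Nat.factorial_eq_mul_doubleFactorial,
    show 2 * n + 1 + 1 = 2 * (n + 1) by ring, Nat.doubleFactorial_two_mul,
    Nat.mul_div_cancel_left _ (by positivity)]

theorem phi_pos : ∀ n, 0 < phi n
  | 0 => Nat.one_pos
  | n + 1 => phi_add_one_eq_doubleFactorial n ▸ Nat.doubleFactorial_pos _

theorem phi_succ (n : ℕ) : phi (n + 1) = (2 * n + 1) * phi n := by
  cases n with
  | zero => rfl
  | succ n =>
    rw [phi_add_one_eq_doubleFactorial, phi_add_one_eq_doubleFactorial,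
      show 2 * (n + 1) + 1 = 2 * n + 1 + 2 by ring, Nat.doubleFactorial_add_two]

theorem phi_mul_phi_le (j k m : ℕ) : phi (j + k) * phi (j + m) ≤ phi j * phi (j + k + m) := by
  induction k with
  | zero => simp
  | succ k ih =>
    calc phi (j + (k + 1)) * phi (j + m) = (2 * (j + k) + 1) * (phi (j + k) * phi (j + m)) := by
          rw [← add_assoc, phi_succ, mul_assoc]
      _ ≤ (2 * (j + k + m) + 1) * (phi j * phi (j + k + m)) := Nat.mul_le_mul (by omega) ih
      _ = phi j * phi (j + (k + 1) + m) := by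
          rw [show j + (k + 1) + m = j + k + m + 1 by ring, phi_succ]; ring

theorem mul_sum_phi_mul_phi_le {n : ℕ} (hn : 3 ≤ n) :
    n * ∑ t ∈ range (n - 1), phi (t + 1) * phi (n - 1 - t) ≤ 2 * phi n := by
  obtain ⟨k, rfl⟩ : ∃ k, n = k + 3 := ⟨n - 3, by omega⟩
  have hmiddle : ∀ t ∈ range k, phi (t + 1 + 1) * phi (k + 2 - (t + 1)) ≤ 3 * phi (k + 1) := by
    intro t ht
    have := phi_mul_phi_le 2 t (k - 1 - t)
    rw [show 2 + t + (k - 1 - t) = k + 1 by grind, show phi 2 = 3 from rfl] at this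
    rwa [show k + 2 - (t + 1) = 2 + (k - 1 - t) by grind, show t + 1 + 1 = 2 + t by ring]
  have hsum : ∑ t ∈ range (k + 2), phi (t + 1) * phi (k + 2 - t)
      ≤ k * (3 * phi (k + 1)) + 2 * phi (k + 2) := by
    rw [sum_range_succ', sum_range_succ]
    have := sum_le_card_nsmul _ _ _ hmiddle
    simp only [card_range, smul_eq_mul] at this
    simp only [Nat.sub_zero, show k + 2 - (k + 1) = 1 by omega, show k + 1 + 1 = k + 2 from rfl,
      show phi 1 = 1 from rfl]
    omega
  rw [show k + 3 - 1 = k + 2 by omega]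
  have hpoly : (k + 3) * (7 * k + 6) ≤ 2 * ((2 * k + 5) * (2 * k + 3)) := by nlinarith
  calc (k + 3) * ∑ t ∈ range (k + 2), phi (t + 1) * phi (k + 2 - t)
      ≤ (k + 3) * (k * (3 * phi (k + 1)) + 2 * phi (k + 2)) := Nat.mul_le_mul_left _ hsum
    _ = (k + 3) * (7 * k + 6) * phi (k + 1) := by rw [phi_succ (k + 1)]; ring
    _ ≤ 2 * ((2 * k + 5) * (2 * k + 3)) * phi (k + 1) := Nat.mul_le_mul_right _ hpoly
    _ = 2 * phi (k + 3) := by rw [phi_succ (k + 2), phi_succ (k + 1)]; ring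

variable {α : Type*}

def IsPerfectMatchingOn (s : Finset α) (P : Finset (Finset α)) : Prop :=
  (∀ b ∈ P, #b = 2 ∧ b ⊆ s) ∧ ∀ x ∈ s, ∃! b, b ∈ P ∧ x ∈ b

open scoped Classical in
noncomputable def perfectMatchings (s : Finset α) : Finset (Finset (Finset α)) :=
  s.powerset.powerset.filter (IsPerfectMatchingOn s)

theorem mem_perfectMatchings {s : Finset α} {P : Finset (Finset α)} :
    P ∈ perfectMatchings s ↔ IsPerfectMatchingOn s P := by
  classical
  rw [perfectMatchings, mem_filter, mem_powerset, and_iff_right_iff_imp]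
  exact fun hP b hb => mem_powerset.mpr (hP.1 b hb).2

theorem IsPerfectMatchingOn.eq_of_mem {s : Finset α} {P : Finset (Finset α)}
    (hP : IsPerfectMatchingOn s P) {b c : Finset α} {x : α} (hb : b ∈ P) (hc : c ∈ P)
    (hxb : x ∈ b) (hxc : x ∈ c) : b = c :=
  (hP.2 x ((hP.1 b hb).2 hxb)).unique ⟨hb, hxb⟩ ⟨hc, hxc⟩

theorem IsPerfectMatchingOn.nonempty {s : Finset α} {P : Finset (Finset α)}
    (hP : IsPerfectMatchingOn s P) {b : Finset α} (hb : b ∈ P) : b.Nonempty :=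
  card_pos.mp (by rw [(hP.1 b hb).1]; norm_num)

theorem perfectMatchings_empty : perfectMatchings (∅ : Finset α) = {∅} := by
  refine eq_singleton_iff_unique_mem.mpr ⟨mem_perfectMatchings.mpr ⟨by simp, by simp⟩,
    fun P hP => eq_empty_of_forall_notMem fun b hb => ?_⟩
  obtain ⟨x, hx⟩ := (mem_perfectMatchings.mp hP).nonempty hb
  exact notMem_empty x (((mem_perfectMatchings.mp hP).1 b hb).2 hx)

def IsSplitBy (t u : Finset α) (P : Finset (Finset α)) : Prop :=
  ∀ b ∈ P, b ⊆ t ∨ b ⊆ u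

theorem IsSplitBy.subset_of_mem {t u : Finset α} {P : Finset (Finset α)} (hP : IsSplitBy t u P)
    (htu : Disjoint t u) {b : Finset α} (hb : b ∈ P) {x : α} (hxb : x ∈ b) (hxt : x ∈ t) :
    b ⊆ t :=
  (hP b hb).resolve_right fun hbu => disjoint_left.mp htu hxt (hbu hxb)

variable [DecidableEq α]

instance (t u : Finset α) : DecidablePred (IsSplitBy t u) := fun _ => decidableDforallFinset

namespace IsPerfectMatchingOn

variable {s t u : Finset α} {P Q R : Finset (Finset α)}

theorem card_eq_two_mul (hP : IsPerfectMatchingOn s P) : #s = 2 * #P := by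
  have hs : s = P.biUnion id := by
    ext x
    simp only [mem_biUnion, id]
    refine ⟨fun hx => ?_, fun ⟨b, hb, hxb⟩ => (hP.1 b hb).2 hxb⟩
    obtain ⟨b, ⟨hb, hxb⟩, -⟩ := hP.2 x hx
    exact ⟨b, hb, hxb⟩
  have hdisj : (P : Set (Finset α)).PairwiseDisjoint id := fun b hb c hc hbc =>
    disjoint_left.mpr fun x hxb hxc => hbc (hP.eq_of_mem hb hc hxb hxc)
  rw [hs, card_biUnion hdisj]
  exact (sum_const_nat fun b hb => (hP.1 b hb).1).trans (mul_comm _ _)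

theorem restrict (hP : IsPerfectMatchingOn s P) (hts : t ⊆ s)
    (ht : ∀ b ∈ P, ∀ x ∈ b, x ∈ t → b ⊆ t) : IsPerfectMatchingOn t (P.filter (· ⊆ t)) := by
  refine ⟨fun b hb => ?_, fun x hx => ?_⟩
  · obtain ⟨hb, hbt⟩ := mem_filter.mp hb
    exact ⟨(hP.1 b hb).1, hbt⟩
  · obtain ⟨b, ⟨hb, hxb⟩, huniq⟩ := hP.2 x (hts hx)
    exact ⟨b, ⟨mem_filter.mpr ⟨hb, ht b hb x hxb hx⟩, hxb⟩,
      fun c ⟨hc, hxc⟩ => huniq c ⟨(mem_filter.mp hc).1, hxc⟩⟩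

theorem existsUnique_mem_union_iff (htu : Disjoint t u) (hR : IsPerfectMatchingOn u R) {x : α}
    (hx : x ∈ t) : (∃! b, b ∈ Q ∪ R ∧ x ∈ b) ↔ ∃! b, b ∈ Q ∧ x ∈ b := by
  refine existsUnique_congr fun b => ⟨fun ⟨hb, hxb⟩ => ⟨?_, hxb⟩, fun ⟨hb, hxb⟩ =>
    ⟨mem_union_left _ hb, hxb⟩⟩
  rcases mem_union.mp hb with hb | hb
  · exact hb
  · exact absurd ((hR.1 b hb).2 hxb) (disjoint_left.mp htu hx)

theorem union (htu : Disjoint t u) (hQ : IsPerfectMatchingOn t Q)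
    (hR : IsPerfectMatchingOn u R) : IsPerfectMatchingOn (t ∪ u) (Q ∪ R) := by
  refine ⟨fun b hb => ?_, fun x hx => ?_⟩
  · rcases mem_union.mp hb with hb | hb
    · exact ⟨(hQ.1 b hb).1, (hQ.1 b hb).2.trans subset_union_left⟩
    · exact ⟨(hR.1 b hb).1, (hR.1 b hb).2.trans subset_union_right⟩
  · rcases mem_union.mp hx with hx | hx
    · exact (existsUnique_mem_union_iff htu hR hx).mpr (hQ.2 x hx)
    · rw [union_comm]
      exact (existsUnique_mem_union_iff htu.symm hQ hx).mpr (hR.2 x hx)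

theorem isSplitBy_union (hQ : IsPerfectMatchingOn t Q) (hR : IsPerfectMatchingOn u R) :
    IsSplitBy t u (Q ∪ R) := fun b hb =>
  (mem_union.mp hb).imp (fun hb => (hQ.1 b hb).2) fun hb => (hR.1 b hb).2

theorem filter_union_eq_left (htu : Disjoint t u) (hQ : IsPerfectMatchingOn t Q)
    (hR : IsPerfectMatchingOn u R) : (Q ∪ R).filter (· ⊆ t) = Q := by
  rw [filter_union, filter_true_of_mem fun b hb => (hQ.1 b hb).2,
    filter_false_of_mem fun b hb hbt => ?_, union_empty]
  obtain ⟨x, hx⟩ := hR.nonempty hb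
  exact disjoint_left.mp htu (hbt hx) ((hR.1 b hb).2 hx)

theorem mem_iff_isSplitBy (hP : IsPerfectMatchingOn s P) (hts : t ⊆ s) (ht : #t = 2) :
    t ∈ P ↔ IsSplitBy t (s \ t) P := by
  constructor
  · intro htP b hb
    by_cases hbt : b = t
    · exact Or.inl hbt.le
    · exact Or.inr fun x hxb => mem_sdiff.mpr
        ⟨(hP.1 b hb).2 hxb, fun hxt => hbt (hP.eq_of_mem hb htP hxb hxt)⟩
  · intro hsplit
    obtain ⟨x, hxt⟩ := card_pos.mp (by omega : 0 < #t)
    obtain ⟨b, ⟨hb, hxb⟩, -⟩ := hP.2 x (hts hxt)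
    rwa [← eq_of_subset_of_card_le (hsplit.subset_of_mem disjoint_sdiff hb hxb hxt)
      (by rw [ht, (hP.1 b hb).1])]

theorem exists_pair_mem (hP : IsPerfectMatchingOn s P) {a : α} (ha : a ∈ s) :
    ∃ b ∈ s.erase a, {a, b} ∈ P := by
  obtain ⟨c, ⟨hc, hac⟩, -⟩ := hP.2 a ha
  obtain ⟨b, hb⟩ := card_eq_one.mp (by rw [card_erase_of_mem hac, (hP.1 c hc).1] :
    #(c.erase a) = 1)
  have hbc : b ∈ c.erase a := hb ▸ mem_singleton_self b
  refine ⟨b, mem_erase.mpr ⟨(mem_erase.mp hbc).1, (hP.1 c hc).2 (mem_of_mem_erase hbc)⟩, ?_⟩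
  rwa [← hb, insert_erase hac]

end IsPerfectMatchingOn

open IsPerfectMatchingOn

theorem card_filter_isSplitBy_perfectMatchings_union {t u : Finset α} (htu : Disjoint t u) :
    #((perfectMatchings (t ∪ u)).filter (IsSplitBy t u)) =
      #(perfectMatchings t) * #(perfectMatchings u) := by
  rw [← card_product]
  refine card_nbij' (fun P => (P.filter (· ⊆ t), P.filter (· ⊆ u))) (fun QR => QR.1 ∪ QR.2)
    (fun P hP => ?_) (fun QR hQR => ?_) (fun P hP => ?_) (fun QR hQR => ?_)
  · simp only [coe_filter, Set.mem_ofPred_eq, mem_perfectMatchings] at hP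
    simp only [coe_product, Set.mem_prod, mem_coe, mem_perfectMatchings]
    have hsplit' : IsSplitBy u t P := fun b hb => (hP.2 b hb).symm
    exact ⟨hP.1.restrict subset_union_left fun b hb x => hP.2.subset_of_mem htu hb,
      hP.1.restrict subset_union_right fun b hb x => hsplit'.subset_of_mem htu.symm hb⟩
  · simp only [coe_product, Set.mem_prod, mem_coe, mem_perfectMatchings] at hQR
    simp only [coe_filter, Set.mem_ofPred_eq, mem_perfectMatchings]
    exact ⟨hQR.1.union htu hQR.2, isSplitBy_union hQR.1 hQR.2⟩
  · simp only [coe_filter, Set.mem_ofPred_eq] at hP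
    dsimp only
    rw [← filter_or, filter_true_of_mem hP.2]
  · simp only [coe_product, Set.mem_prod, mem_coe, mem_perfectMatchings] at hQR
    refine Prod.ext (filter_union_eq_left htu hQR.1 hQR.2) ?_
    dsimp only
    rw [union_comm, filter_union_eq_left htu.symm hQR.2 hQR.1]

theorem perfectMatchings_pair {a b : α} (hab : a ≠ b) :
    perfectMatchings ({a, b} : Finset α) = {{{a, b}}} := by
  refine eq_singleton_iff_unique_mem.mpr ⟨mem_perfectMatchings.mpr ⟨fun c hc => ?_,
    fun x hx => ⟨{a, b}, ⟨mem_singleton_self _, hx⟩, fun c hc => mem_singleton.mp hc.1⟩⟩,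
    fun P hP => ?_⟩
  · rw [mem_singleton.mp hc]
    exact ⟨card_pair hab, subset_rfl⟩
  · have hP := mem_perfectMatchings.mp hP
    have hblock : ∀ c ∈ P, c = {a, b} := fun c hc =>
      eq_of_subset_of_card_le (hP.1 c hc).2 (by rw [(hP.1 c hc).1, card_pair hab])
    obtain ⟨c, ⟨hc, -⟩, -⟩ := hP.2 a (mem_insert_self a {b})
    exact eq_singleton_iff_unique_mem.mpr ⟨hblock c hc ▸ hc, hblock⟩

theorem card_filter_pair_mem_perfectMatchings {s : Finset α} {a b : α} (hab : a ≠ b)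
    (hs : {a, b} ⊆ s) :
    #((perfectMatchings s).filter ({a, b} ∈ ·)) = #(perfectMatchings (s \ {a, b})) := by
  have hsplit := card_filter_isSplitBy_perfectMatchings_union (t := {a, b}) (u := s \ {a, b})
    disjoint_sdiff
  rw [union_sdiff_of_subset hs, perfectMatchings_pair hab, card_singleton, one_mul] at hsplit
  rw [← hsplit, filter_congr fun P hP =>
    (mem_perfectMatchings.mp hP).mem_iff_isSplitBy hs (card_pair hab)]

theorem card_perfectMatchings_eq_sum {s : Finset α} {a : α} (ha : a ∈ s) :
    #(perfectMatchings s) = ∑ b ∈ s.erase a, #((perfectMatchings s).filter ({a, b} ∈ ·)) := by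
  have hcover : perfectMatchings s =
      (s.erase a).biUnion fun b => (perfectMatchings s).filter ({a, b} ∈ ·) := by
    ext P
    simp only [mem_biUnion, mem_filter]
    exact ⟨fun hP => ((mem_perfectMatchings.mp hP).exists_pair_mem ha).imp
      fun b ⟨hb, hab⟩ => ⟨hb, hP, hab⟩, fun ⟨_, _, hP, _⟩ => hP⟩
  have hdisj : ((s.erase a : Finset α) : Set α).PairwiseDisjoint
      fun b => (perfectMatchings s).filter ({a, b} ∈ ·) := by
    intro b hb c hc hbc
    refine disjoint_left.mpr fun P hPb hPc => hbc ?_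
    simp only [mem_filter] at hPb hPc
    have hpair := (mem_perfectMatchings.mp hPb.1).eq_of_mem hPb.2 hPc.2 (mem_insert_self a _)
      (mem_insert_self a _)
    have hb' : b ∈ ({a, c} : Finset α) := hpair ▸ mem_insert_of_mem (mem_singleton_self b)
    exact (mem_insert.mp hb').resolve_left (mem_erase.mp hb).1 |> mem_singleton.mp
  rw [← card_biUnion hdisj, ← hcover]

theorem card_perfectMatchings {s : Finset α} {n : ℕ} (hs : #s = 2 * n) :
    #(perfectMatchings s) = phi n := by
  induction n generalizing s with
  | zero =>
    rw [card_eq_zero.mp (by simpa using hs : #s = 0), perfectMatchings_empty, card_singleton]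
    rfl
  | succ n ih =>
    obtain ⟨a, ha⟩ := card_pos.mp (by omega : 0 < #s)
    have hfiber : ∀ b ∈ s.erase a, #((perfectMatchings s).filter ({a, b} ∈ ·)) = phi n := by
      intro b hb
      obtain ⟨hba, hbs⟩ := mem_erase.mp hb
      have hab : {a, b} ⊆ s := insert_subset ha (singleton_subset_iff.mpr hbs)
      rw [card_filter_pair_mem_perfectMatchings hba.symm hab,
        ih (by rw [card_sdiff_of_subset hab, card_pair hba.symm, hs]; omega)]
    rw [card_perfectMatchings_eq_sum ha, sum_congr rfl hfiber, sum_const, smul_eq_mul,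
      card_erase_of_mem ha, hs, show 2 * (n + 1) - 1 = 2 * n + 1 by omega, phi_succ]

def IsDecomposable {m : ℕ} (P : Finset (Finset (Fin m))) : Prop :=
  ∃ j : ℕ, 0 < j ∧ j < m ∧ ∀ b ∈ P, (∀ x ∈ b, (x : ℕ) < j) ∨ (∀ x ∈ b, j ≤ (x : ℕ))

def initialSegment (m j : ℕ) : Finset (Fin m) := {x | (x : ℕ) < j}

theorem card_initialSegment {m j : ℕ} (h : j ≤ m) : #(initialSegment m j) = j := by
  rw [initialSegment, Fin.card_filter_val_lt, min_eq_right h]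

open scoped Classical in
theorem numIndecomposable_add_card_filter_isDecomposable (n : ℕ) :
    numIndecomposable n + #((perfectMatchings (univ : Finset (Fin (2 * n)))).filter IsDecomposable)
      = phi n := by
  rw [← card_perfectMatchings (s := (univ : Finset (Fin (2 * n)))) (by simp),
    ← card_filter_add_card_filter_not (s := perfectMatchings univ) (p := IsDecomposable), add_comm]
  congr 1
  rw [numIndecomposable, ← Nat.card_eq_finsetCard]
  exact Nat.card_congr <| Equiv.subtypeEquivRight (α := Finset (Finset (Fin (2 * n)))) fun P => by
    rw [mem_filter, mem_perfectMatchings, IsPerfectMatchingOn, IsDecomposable]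
    simp only [subset_univ, and_true, mem_univ, forall_const, and_assoc]

theorem card_filter_isSplitBy_initialSegment {n k : ℕ} (hk : k ≤ n) :
    #((perfectMatchings (univ : Finset (Fin (2 * n)))).filter
      (IsSplitBy (initialSegment (2 * n) (2 * k)) (initialSegment (2 * n) (2 * k))ᶜ))
      = phi k * phi (n - k) := by
  have hsplit := card_filter_isSplitBy_perfectMatchings_union (t := initialSegment (2 * n) (2 * k))
    (u := (initialSegment (2 * n) (2 * k))ᶜ) disjoint_compl_right
  have hcard : #(initialSegment (2 * n) (2 * k)) = 2 * k := card_initialSegment (by omega)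
  rwa [union_compl, card_perfectMatchings hcard, card_perfectMatchings (n := n - k)
    (by rw [card_compl, Fintype.card_fin, hcard]; omega)] at hsplit

theorem filter_isDecomposable_subset (n : ℕ) [DecidablePred (IsDecomposable (m := 2 * n))] :
    (perfectMatchings (univ : Finset (Fin (2 * n)))).filter IsDecomposable ⊆
      (range (n - 1)).biUnion fun t => (perfectMatchings univ).filter (IsSplitBy
        (initialSegment (2 * n) (2 * (t + 1))) (initialSegment (2 * n) (2 * (t + 1)))ᶜ) := by
  intro P hP
  obtain ⟨hPmem, j, hj0, hj, hsplit⟩ := mem_filter.mp hP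
  have hP := mem_perfectMatchings.mp hPmem
  set L := initialSegment (2 * n) j
  have hsplit' : IsSplitBy L Lᶜ P := by
    simpa [IsSplitBy, L, initialSegment, subset_iff] using hsplit
  have hL : IsPerfectMatchingOn L (P.filter (· ⊆ L)) := hP.restrict (subset_univ L)
    fun b hb x => hsplit'.subset_of_mem disjoint_compl_right hb
  have hcard := hL.card_eq_two_mul
  rw [card_initialSegment hj.le] at hcard
  refine mem_biUnion.mpr ⟨#(P.filter (· ⊆ L)) - 1, mem_range.mpr (by omega),
    mem_filter.mpr ⟨hPmem, ?_⟩⟩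
  rwa [show 2 * (#(P.filter (· ⊆ L)) - 1 + 1) = j by omega]

open scoped Classical in
theorem card_filter_isDecomposable_le (n : ℕ) :
    #((perfectMatchings (univ : Finset (Fin (2 * n)))).filter IsDecomposable) ≤
      ∑ t ∈ range (n - 1), phi (t + 1) * phi (n - 1 - t) := by
  refine (card_le_card (filter_isDecomposable_subset n)).trans (card_biUnion_le.trans
    (sum_le_sum fun t ht => ?_))
  rw [card_filter_isSplitBy_initialSegment (by grind), Nat.sub_sub, add_comm 1 t]

theorem mul_phi_le_mul_numIndecomposable_add {n : ℕ} (hn : 3 ≤ n) :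
    n * phi n ≤ n * numIndecomposable n + 2 * phi n := by
  classical
  calc n * phi n = n * numIndecomposable n
        + n * #((perfectMatchings (univ : Finset (Fin (2 * n)))).filter IsDecomposable) := by
        rw [← mul_add, numIndecomposable_add_card_filter_isDecomposable]
    _ ≤ n * numIndecomposable n + 2 * phi n := Nat.add_le_add_left
        ((Nat.mul_le_mul_left n (card_filter_isDecomposable_le n)).trans
          (mul_sum_phi_mul_phi_le hn)) _

/-- A uniform random chord diagram is asymptotically almost surely
indecomposable: `lim_{n→∞} I(n)/(2n−1)!! = 1`. -/
theorem indecomposable_aas :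
    Tendsto (fun n : ℕ => (numIndecomposable n : ℝ) / (phi n : ℝ)) atTop (nhds 1) := by
  have hphi : ∀ n, (0 : ℝ) < phi n := fun n => by exact_mod_cast phi_pos n
  have hlower : Tendsto (fun n : ℕ => 1 - 2 / (n : ℝ)) atTop (nhds 1) := by
    simpa using tendsto_const_nhds.sub (tendsto_const_div_atTop_nhds_zero_nat (2 : ℝ))
  refine tendsto_of_tendsto_of_tendsto_of_le_of_le' hlower tendsto_const_nhds ?_
    (Eventually.of_forall fun n => ?_)
  · filter_upwards [eventually_ge_atTop 3] with n hn
    have hbound : (n : ℝ) * phi n ≤ n * numIndecomposable n + 2 * phi n := by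
      exact_mod_cast mul_phi_le_mul_numIndecomposable_add hn
    rw [le_div_iff₀ (hphi n), sub_mul, one_mul, div_mul_eq_mul_div, sub_le_comm,
      le_div_iff₀ (by positivity)]
    linarith
  · rw [div_le_one (hphi n)]
    exact_mod_cast Nat.le.intro (numIndecomposable_add_card_filter_isDecomposable n)
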